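/- Assume 0 < p, q < 1 and let p_s = p_s^e = s with 0 < s < 1. Let g : (0,1] → ℝ denote the map sending the transmission probability p_α to π(0,0,1) + π(1,1,0) (with π built from p, q, s, s, p_α). Then: (i) if p + q > 1, g is monotone nondecreasing on (0,1]; (ii) if p + q < 1, g is monotone nonincreasing on (0,1]; (iii) if p + q = 1, g is constant on (0,1]. -/

import Mathlib

open Matrix

noncomputable section

/-- λ11 = p_α p_s p_s^e -/
def l11 (ps pse pa : ℝ) : ℝ := pa * ps * pse
/-- λ10 = p_α p_s (1 − p_s^e) -/
def l10 (ps pse pa : ℝ) : ℝ := pa * ps * (1 - pse)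
/-- λ01 = p_α (1 − p_s) p_s^e -/
def l01 (ps pse pa : ℝ) : ℝ := pa * (1 - ps) * pse
/-- λ00 = p_α (1 − p_s)(1 − p_s^e) + (1 − p_α) -/
def l00 (ps pse pa : ℝ) : ℝ := pa * (1 - ps) * (1 - pse) + (1 - pa)
/-- P_A = λ11 + λ10 -/
def PA (ps pse pa : ℝ) : ℝ := l11 ps pse pa + l10 ps pse pa
/-- P_B = λ11 + λ01 -/
def PB (ps pse pa : ℝ) : ℝ := l11 ps pse pa + l01 ps pse pa

/-- Source transition matrix Q. -/
def Qm (p q : ℝ) : Matrix (Fin 2) (Fin 2) ℝ := !![1 - p, p; q, 1 - q]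

/-- Stationary distribution of the source: v_0 = q/(p+q), v_1 = p/(p+q). -/
def vstat (p q : ℝ) : Fin 2 → ℝ := ![q / (p + q), p / (p + q)]

/-- T1(x,a,b) = δ(a,b) v_a λ11 [(I − λ00 Q)⁻¹]_{a,x} -/
def T1 (p q ps pse pa : ℝ) (x a b : Fin 2) : ℝ :=
  (if a = b then (1 : ℝ) else 0) * vstat p q a * l11 ps pse pa *
    ((1 - l00 ps pse pa • Qm p q)⁻¹ a x)

/-- T2(x,a,b) = v_b λ10 P_B [Q (I − (1−P_B) Q)⁻¹]_{b,a} [(I − λ00 Q)⁻¹]_{a,x} -/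
def T2 (p q ps pse pa : ℝ) (x a b : Fin 2) : ℝ :=
  vstat p q b * l10 ps pse pa * PB ps pse pa *
    ((Qm p q * (1 - (1 - PB ps pse pa) • Qm p q)⁻¹) b a) *
    ((1 - l00 ps pse pa • Qm p q)⁻¹ a x)

/-- T3(x,a,b) = v_a λ01 P_A [Q (I − (1−P_A) Q)⁻¹]_{a,b} [(I − λ00 Q)⁻¹]_{b,x} -/
def T3 (p q ps pse pa : ℝ) (x a b : Fin 2) : ℝ :=
  vstat p q a * l01 ps pse pa * PA ps pse pa *
    ((Qm p q * (1 - (1 - PA ps pse pa) • Qm p q)⁻¹) a b) *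
    ((1 - l00 ps pse pa • Qm p q)⁻¹ b x)

/-- π(x,a,b) = T1 + T2 + T3 -/
def piDist (p q ps pse pa : ℝ) (x a b : Fin 2) : ℝ :=
  T1 p q ps pse pa x a b + T2 p q ps pse pa x a b + T3 p q ps pse pa x a b

/-!
The source kernel splits as `Q = Π + r (1 - Π)` with `Π` the rank-one projection onto the
stationary law `v` and `r = 1 - p - q`, so every resolvent is diagonal in that splitting:
`(1 - (1 - t) Q)⁻¹ = t⁻¹ Π + (p + q + t r)⁻¹ (1 - Π)`.
In the symmetric case the accuracy only involves the off-diagonal entries of `Q (1 - (1 - P) Q)⁻¹`,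
which are `p / (P D)` and `q / (P D)` with `D = p + q + P r`, and the row sums of
`(1 - λ₀₀ Q)⁻¹`, which all equal `(1 - λ₀₀)⁻¹`. Hence the accuracy is `K / (p + q + s r p_α)`
with `K > 0`, a monotone function of `p_α` whose direction is the sign of `p + q - 1`.
-/

section Idempotent

variable {K A : Type*} [Field K] [Ring A] [Algebra K A] {e : A}

theorem IsIdempotentElem.smul_add_smul_one_sub_mul (he : IsIdempotentElem e) (a b a' b' : K) :
    (a • e + b • (1 - e)) * (a' • e + b' • (1 - e)) = (a * a') • e + (b * b') • (1 - e) := by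
  simp only [add_mul, mul_add, smul_mul_smul_comm, he.eq, he.one_sub.eq, he.mul_one_sub_self,
    he.one_sub_mul_self, smul_zero, add_zero, zero_add]

end Idempotent

def statProj (p q : ℝ) : Matrix (Fin 2) (Fin 2) ℝ := Matrix.of fun _ b => vstat p q b

section Resolvent

variable {p q : ℝ}

theorem isIdempotentElem_statProj (hpq : p + q ≠ 0) : IsIdempotentElem (statProj p q) := by
  ext i j
  fin_cases i <;> fin_cases j <;>
    simp only [statProj, vstat, Matrix.mul_apply, Fin.sum_univ_two, of_apply, Fin.isValue,
      Fin.zero_eta, Fin.mk_one, cons_val_zero, cons_val_one, cons_val_fin_one] <;>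
    field_simp <;> ring

theorem Qm_eq_statProj (hpq : p + q ≠ 0) :
    Qm p q = (1 : ℝ) • statProj p q + (1 - p - q) • (1 - statProj p q) := by
  ext i j
  fin_cases i <;> fin_cases j <;>
    simp only [Qm, statProj, vstat, one_smul, Matrix.add_apply, Matrix.smul_apply,
      Matrix.sub_apply, of_apply, Fin.isValue, Fin.zero_eta, Fin.mk_one, cons_val', cons_val_zero,
      cons_val_one, cons_val_fin_one, one_apply_eq, ne_eq, zero_ne_one, one_ne_zero,
      not_false_eq_true, one_apply_ne, smul_eq_mul] <;>
    field_simp <;> ring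

theorem one_sub_smul_Qm_eq (hpq : p + q ≠ 0) (t : ℝ) :
    1 - (1 - t) • Qm p q = t • statProj p q + (p + q + t * (1 - p - q)) • (1 - statProj p q) := by
  rw [Qm_eq_statProj hpq]
  module

variable {t : ℝ} (hpq : p + q ≠ 0) (ht : t ≠ 0) (hD : p + q + t * (1 - p - q) ≠ 0)
include hpq ht hD

theorem inv_one_sub_smul_Qm :
    (1 - (1 - t) • Qm p q)⁻¹ =
      t⁻¹ • statProj p q + (p + q + t * (1 - p - q))⁻¹ • (1 - statProj p q) := by
  refine Matrix.inv_eq_right_inv ?_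
  rw [one_sub_smul_Qm_eq hpq, (isIdempotentElem_statProj hpq).smul_add_smul_one_sub_mul,
    mul_inv_cancel₀ ht, mul_inv_cancel₀ hD, one_smul, one_smul, add_sub_cancel]

theorem Qm_mul_inv_one_sub_smul_Qm :
    Qm p q * (1 - (1 - t) • Qm p q)⁻¹ =
      t⁻¹ • statProj p q + ((1 - p - q) / (p + q + t * (1 - p - q))) • (1 - statProj p q) := by
  rw [inv_one_sub_smul_Qm hpq ht hD, Qm_eq_statProj hpq,
    (isIdempotentElem_statProj hpq).smul_add_smul_one_sub_mul, one_mul, div_eq_mul_inv]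

theorem inv_one_sub_smul_Qm_apply_zero_add_apply_one (a : Fin 2) :
    (1 - (1 - t) • Qm p q)⁻¹ a 0 + (1 - (1 - t) • Qm p q)⁻¹ a 1 = t⁻¹ := by
  rw [inv_one_sub_smul_Qm hpq ht hD]
  fin_cases a <;>
    simp only [statProj, vstat, Matrix.add_apply, Matrix.smul_apply, Matrix.sub_apply, of_apply,
      Fin.isValue, Fin.zero_eta, Fin.mk_one, cons_val_zero, cons_val_one, cons_val_fin_one,
      one_apply_eq, ne_eq, zero_ne_one, one_ne_zero, not_false_eq_true, one_apply_ne,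
      smul_eq_mul] <;>
    field_simp <;> ring

theorem Qm_mul_inv_one_sub_smul_Qm_apply_zero_one :
    (Qm p q * (1 - (1 - t) • Qm p q)⁻¹) 0 1 = p / (t * (p + q + t * (1 - p - q))) := by
  rw [Qm_mul_inv_one_sub_smul_Qm hpq ht hD]
  simp only [statProj, vstat, Matrix.add_apply, Matrix.smul_apply, Matrix.sub_apply, of_apply,
    Fin.isValue, cons_val_one, cons_val_fin_one, ne_eq, zero_ne_one, not_false_eq_true,
    one_apply_ne, smul_eq_mul]
  field_simp
  ring

theorem Qm_mul_inv_one_sub_smul_Qm_apply_one_zero :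
    (Qm p q * (1 - (1 - t) • Qm p q)⁻¹) 1 0 = q / (t * (p + q + t * (1 - p - q))) := by
  rw [Qm_mul_inv_one_sub_smul_Qm hpq ht hD]
  simp only [statProj, vstat, Matrix.add_apply, Matrix.smul_apply, Matrix.sub_apply, of_apply,
    Fin.isValue, cons_val_zero, ne_eq, one_ne_zero, not_false_eq_true, one_apply_ne, smul_eq_mul]
  field_simp
  ring

end Resolvent

theorem add_add_mul_sub_sub_pos {p q t : ℝ} (hpq : 0 < p + q) (ht0 : 0 ≤ t) (ht1 : t ≤ 1) :
    0 < p + q + t * (1 - p - q) := by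
  rcases ht1.lt_or_eq with ht1 | rfl
  · nlinarith [mul_pos hpq (sub_pos.2 ht1)]
  · simp

theorem piDist_001_add_piDist_110_eq_div {p q s pa : ℝ} (hpq : 0 < p + q) (hs0 : 0 < s)
    (hs1 : s ≤ 1) (hpa0 : 0 < pa) (hpa1 : pa ≤ 1) :
    piDist p q s s pa 0 0 1 + piDist p q s s pa 1 1 0 =
      2 * p * q * (1 - s) / ((p + q) * (2 - s)) / (p + q + s * (1 - p - q) * pa) := by
  have hP : 0 < s * pa := mul_pos hs0 hpa0
  have hP₀ : 0 < s * (2 - s) * pa := by nlinarith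
  have hD := (add_add_mul_sub_sub_pos hpq hP.le (mul_le_one₀ hs1 hpa0.le hpa1)).ne'
  have hD₀ := (add_add_mul_sub_sub_pos hpq hP₀.le
    (mul_le_one₀ (by nlinarith [sq_nonneg (1 - s)]) hpa0.le hpa1)).ne'
  have hPA : PA s s pa = s * pa := by simp only [PA, l11, l10]; ring
  have hPB : PB s s pa = s * pa := by simp only [PB, l11, l01]; ring
  have hl00 : l00 s s pa = 1 - s * (2 - s) * pa := by simp only [l00]; ring
  simp only [piDist, T1, T2, T3, hPA, hPB, hl00, l11, l10, l01, vstat,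
    Qm_mul_inv_one_sub_smul_Qm_apply_zero_one hpq.ne' hP.ne' hD,
    Qm_mul_inv_one_sub_smul_Qm_apply_one_zero hpq.ne' hP.ne' hD]
  -- only the row sums of the outer resolvent survive
  have hrow := inv_one_sub_smul_Qm_apply_zero_add_apply_one hpq.ne' hP₀.ne' hD₀
  rw [eq_sub_of_add_eq' (hrow 0), eq_sub_of_add_eq' (hrow 1)]
  simp only [Fin.isValue, zero_ne_one, one_ne_zero, if_false, zero_mul, zero_add,
    cons_val_zero, cons_val_one, cons_val_fin_one]
  have h2s : 2 - s ≠ 0 := by linarith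
  field_simp
  ring

theorem monotoneOn_const_div_add_mul {K a b : ℝ} {S : Set ℝ} (hK : 0 ≤ K) (hb : b ≤ 0)
    (hpos : ∀ x ∈ S, 0 < a + b * x) : MonotoneOn (fun x => K / (a + b * x)) S :=
  fun x _ y hy hxy => div_le_div_of_nonneg_left hK (hpos y hy) (by nlinarith)

theorem antitoneOn_const_div_add_mul {K a b : ℝ} {S : Set ℝ} (hK : 0 ≤ K) (hb : 0 ≤ b)
    (hpos : ∀ x ∈ S, 0 < a + b * x) : AntitoneOn (fun x => K / (a + b * x)) S :=
  fun x hx y _ hxy => div_le_div_of_nonneg_left hK (hpos x hx) (by nlinarith)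

theorem stmt15 (p q s : ℝ)
    (hp0 : 0 < p) (hq0 : 0 < q)
    (hs0 : 0 < s) (hs1 : s < 1) :
    let g : ℝ → ℝ := fun pa => piDist p q s s pa 0 0 1 + piDist p q s s pa 1 1 0
    (1 < p + q → MonotoneOn g (Set.Ioc (0 : ℝ) 1)) ∧
    (p + q < 1 → AntitoneOn g (Set.Ioc (0 : ℝ) 1)) ∧
    (p + q = 1 → ∀ x ∈ Set.Ioc (0 : ℝ) 1, ∀ y ∈ Set.Ioc (0 : ℝ) 1, g x = g y) := by
  intro g
  have hpq : 0 < p + q := by linarith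
  set K := 2 * p * q * (1 - s) / ((p + q) * (2 - s))
  have hg : Set.EqOn g (fun pa => K / (p + q + s * (1 - p - q) * pa)) (Set.Ioc 0 1) :=
    fun pa hpa => piDist_001_add_piDist_110_eq_div hpq hs0 hs1.le hpa.1 hpa.2
  have hK : 0 ≤ K := div_nonneg (by have := mul_pos hp0 hq0; nlinarith) (by nlinarith)
  have hD (pa : ℝ) (hpa : pa ∈ Set.Ioc 0 1) : 0 < p + q + s * (1 - p - q) * pa := by
    rw [mul_right_comm]
    exact add_add_mul_sub_sub_pos hpq (mul_pos hs0 hpa.1).le (mul_le_one₀ hs1.le hpa.1.le hpa.2)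
  refine ⟨fun h => ?_, fun h => ?_, fun h x hx y hy => ?_⟩
  · exact (monotoneOn_const_div_add_mul hK (by nlinarith) hD).congr hg.symm
  · exact (antitoneOn_const_div_add_mul hK (by nlinarith) hD).congr hg.symm
  · rw [hg hx, hg hy, show 1 - p - q = 0 by linarith]
    simp
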